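/- arXiv:2506.08807 — 2 statements merged into one kernel-verified Lean document; each statement's English description precedes it below -/
import Mathlib

section
/- Let $W$ be a row-stochastic primitive matrix in $\mathbb{R}^{L \times L}$ with $\lim_{t\to\infty} W^t = \mathbf{1} v^\top$ for a stochastic vector $v$. Let $\lambda_t \in [0,1)$ with $\lambda_t \to 0$ and consider the dynamics $x_{t+1} = \lambda_t x_0 + (1-\lambda_t) W x_t$. Then $x_t$ converges, and its limit is a consensus vector, i.e., $\lim_{t\to\infty} x_t = \xi \mathbf{1}$ for some scalar $\xi$. -/
open Filter Matrix

/-- Row-stochastic matrices are sup-norm nonexpansive (pointwise form). -/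
lemma aux_stoch_bound {L : ℕ} (W : Matrix (Fin L) (Fin L) ℝ)
    (hW0 : ∀ i j, 0 ≤ W i j) (hWrow : ∀ i, ∑ j, W i j = 1)
    (z : Fin L → ℝ) (C : ℝ) (hz : ∀ j, |z j| ≤ C) (i : Fin L) :
    |W.mulVec z i| ≤ C := by
  have h1 : W.mulVec z i = ∑ j, W i j * z j := by simp [Matrix.mulVec, dotProduct]
  rw [h1]
  calc |∑ j, W i j * z j| ≤ ∑ j, |W i j * z j| := Finset.abs_sum_le_sum_abs _ _
    _ = ∑ j, W i j * |z j| := by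
        refine Finset.sum_congr rfl fun j _ => ?_
        rw [abs_mul, abs_of_nonneg (hW0 i j)]
    _ ≤ ∑ j, W i j * C := by
        refine Finset.sum_le_sum fun j _ => mul_le_mul_of_nonneg_left (hz j) (hW0 i j)
    _ = C := by rw [← Finset.sum_mul, hWrow, one_mul]

/-- If `a (t+T) ≤ a t / 2 + e t` with `a` nonnegative bounded and `e → 0`, then `a → 0`. -/
lemma aux_contract (a : ℕ → ℝ) (B : ℝ) (ha0 : ∀ t, 0 ≤ a t) (haB : ∀ t, a t ≤ B)
    (T : ℕ) (e : ℕ → ℝ) (he : Tendsto e atTop (nhds 0))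
    (hstep : ∀ t, a (t + T) ≤ a t / 2 + e t) :
    Tendsto a atTop (nhds 0) := by
  have hB0 : 0 ≤ B := le_trans (ha0 0) (haB 0)
  rw [Metric.tendsto_atTop]
  intro ε hε
  have he4 : ∀ᶠ t in atTop, e t ≤ ε / 4 := by
    have := he.eventually (ge_mem_nhds (by linarith : (0:ℝ) < ε/4))
    filter_upwards [this] with t ht using ht
  obtain ⟨N, hN⟩ := he4.exists_forall_of_atTop
  have key : ∀ n : ℕ, ∀ t, N ≤ t → a (t + n * T) ≤ B / 2 ^ n + ε / 2 := by
    intro n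
    induction n with
    | zero => intro t ht; simpa using by linarith [haB t, hε]
    | succ n ih =>
        intro t ht
        have h1 : a (t + n * T + T) ≤ a (t + n * T) / 2 + e (t + n * T) :=
          hstep (t + n * T)
        have h2 : a (t + n * T) ≤ B / 2 ^ n + ε / 2 := ih t ht
        have h3 : e (t + n * T) ≤ ε / 4 := hN _ (le_trans ht (Nat.le_add_right _ _))
        have heq : t + (n + 1) * T = t + n * T + T := by ring
        rw [heq]
        have : (B / 2 ^ n + ε / 2) / 2 = B / 2 ^ (n+1) + ε / 4 := by
          rw [pow_succ]; ring
        linarith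
  have hpow : Tendsto (fun n : ℕ => B / 2 ^ n) atTop (nhds 0) := by
    have h : Tendsto (fun n : ℕ => ((1:ℝ)/2) ^ n) atTop (nhds 0) :=
      tendsto_pow_atTop_nhds_zero_of_lt_one (by norm_num) (by norm_num)
    have := h.const_mul B
    simpa [div_eq_mul_inv, mul_comm, one_div, inv_pow] using this
  obtain ⟨n, hn⟩ := (hpow.eventually (gt_mem_nhds (by linarith : (0:ℝ) < ε/4))).exists
  refine ⟨N + n * T, fun m hm => ?_⟩
  have hm' : N ≤ m - n * T := by omega
  have hrepr : (m - n * T) + n * T = m := by omega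
  have hkey := key n (m - n * T) hm'
  rw [hrepr] at hkey
  have h0 := ha0 m
  rw [Real.dist_eq, sub_zero, abs_of_nonneg h0]
  linarith

/-- Anchored consensus dynamics `x_{t+1} = λ_t x_0 + (1-λ_t) W x_t` with a
row-stochastic primitive matrix `W` (Perron projection `𝟙 vᵀ`) and vanishing
anchoring weights `λ_t ∈ [0,1)` converge to a consensus vector. -/
theorem anchored_dynamics_consensus
    {L : ℕ} (W : Matrix (Fin L) (Fin L) ℝ)
    (hW0 : ∀ i j, 0 ≤ W i j) (hWrow : ∀ i, ∑ j, W i j = 1)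
    (hPrim : ∃ k : ℕ, ∀ i j, 0 < (W ^ k) i j)
    (v : Fin L → ℝ) (hv0 : ∀ i, 0 ≤ v i) (hv1 : ∑ i, v i = 1)
    (hWlim : Tendsto (fun t : ℕ => W ^ t) atTop (nhds (Matrix.of fun _ j => v j)))
    (lam : ℕ → ℝ) (hlam : ∀ t, lam t ∈ Set.Ico (0 : ℝ) 1)
    (hlam0 : Tendsto lam atTop (nhds 0))
    (x : ℕ → Fin L → ℝ)
    (hx : ∀ t, x (t + 1) = fun i => lam t * x 0 i + (1 - lam t) * (W.mulVec (x t)) i) :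
    ∃ ξ : ℝ, Tendsto x atTop (nhds (fun _ => ξ)) := by
  have hL : 0 < L := by
    rcases Nat.eq_zero_or_pos L with h | h
    · subst h; simp at hv1
    · exact h
  -- entrywise convergence of powers
  have hent : ∀ i j, Tendsto (fun t : ℕ => (W ^ t) i j) atTop (nhds (v j)) := by
    intro i j
    have h1 := tendsto_pi_nhds.mp hWlim i
    have h2 := tendsto_pi_nhds.mp h1 j
    simpa using h2
  -- v is a left eigenvector
  have hvW : ∀ k, ∑ j, v j * W j k = v k := by
    intro k
    set i0 : Fin L := ⟨0, hL⟩
    have h1 : Tendsto (fun t : ℕ => (W ^ (t+1)) i0 k) atTop (nhds (v k)) :=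
      (hent i0 k).comp (tendsto_add_atTop_nat 1)
    have h2 : Tendsto (fun t : ℕ => (W ^ (t+1)) i0 k) atTop
        (nhds (∑ j, v j * W j k)) := by
      have hrw : ∀ t : ℕ, (W ^ (t+1)) i0 k = ∑ j, (W ^ t) i0 j * W j k := by
        intro t; rw [pow_succ]; simp [Matrix.mul_apply]
      simp_rw [hrw]
      exact tendsto_finset_sum _ fun j _ => ((hent i0 j).mul_const (W j k))
    exact tendsto_nhds_unique h2 h1
  set ξ := ∑ i, v i * x 0 i with hξ
  set y : ℕ → Fin L → ℝ := fun t i => x t i - ξ with hy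
  -- recursion for y
  have hyrec : ∀ t i, y (t+1) i = lam t * y 0 i + (1 - lam t) * (W.mulVec (y t)) i := by
    intro t i
    have hWx : W.mulVec (y t) i = W.mulVec (x t) i - ξ := by
      simp only [hy, Matrix.mulVec, dotProduct]
      simp_rw [mul_sub]
      rw [Finset.sum_sub_distrib, ← Finset.sum_mul, hWrow, one_mul]
    have h1 : y (t+1) i = x (t+1) i - ξ := rfl
    rw [h1, hx t]
    simp only
    rw [hWx]
    show lam t * x 0 i + (1 - lam t) * W.mulVec (x t) i - ξ
        = lam t * (x 0 i - ξ) + (1 - lam t) * (W.mulVec (x t) i - ξ)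
    ring
  -- v ⬝ y t = 0
  have hvy : ∀ t, ∑ j, v j * y t j = 0 := by
    intro t
    induction t with
    | zero =>
        simp only [hy]
        simp_rw [mul_sub]
        rw [Finset.sum_sub_distrib, ← Finset.sum_mul, hv1, one_mul, hξ, sub_self]
    | succ t ih =>
        have h2 : ∑ j, v j * W.mulVec (y t) j = ∑ k, v k * y t k := by
          simp only [Matrix.mulVec, dotProduct]
          simp_rw [Finset.mul_sum]
          rw [Finset.sum_comm]
          refine Finset.sum_congr rfl fun k _ => ?_
          simp_rw [← mul_assoc]
          rw [← Finset.sum_mul, hvW k]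
        have ihy0 : ∑ j, v j * y 0 j = 0 := by
          simp only [hy]
          simp_rw [mul_sub]
          rw [Finset.sum_sub_distrib, ← Finset.sum_mul, hv1, one_mul, hξ, sub_self]
        calc ∑ j, v j * y (t+1) j
            = lam t * (∑ j, v j * y 0 j) + (1 - lam t) * ∑ j, v j * W.mulVec (y t) j := by
              simp_rw [hyrec t]
              rw [Finset.mul_sum, Finset.mul_sum, ← Finset.sum_add_distrib]
              exact Finset.sum_congr rfl fun j _ => by ring
          _ = 0 := by rw [ihy0, h2, ih]; ring
  -- uniform bound
  set B := ‖y 0‖ with hB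
  have hB0 : 0 ≤ B := norm_nonneg _
  have hy0B : ∀ i, |y 0 i| ≤ B := fun i => by
    simpa [Real.norm_eq_abs] using norm_le_pi_norm (y 0) i
  have hyB : ∀ t i, |y t i| ≤ B := by
    intro t
    induction t with
    | zero => exact hy0B
    | succ t ih =>
        intro i
        rw [hyrec t i]
        obtain ⟨hl0, hl1⟩ := hlam t
        have h1 : |W.mulVec (y t) i| ≤ B := aux_stoch_bound W hW0 hWrow _ B ih i
        calc |lam t * y 0 i + (1 - lam t) * W.mulVec (y t) i|
            ≤ |lam t * y 0 i| + |(1 - lam t) * W.mulVec (y t) i| := abs_add_le _ _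
          _ = lam t * |y 0 i| + (1 - lam t) * |W.mulVec (y t) i| := by
              rw [abs_mul, abs_mul, abs_of_nonneg hl0,
                abs_of_nonneg (show (0:ℝ) ≤ 1 - lam t from by linarith)]
          _ ≤ lam t * B + (1 - lam t) * B :=
              add_le_add (mul_le_mul_of_nonneg_left (hy0B i) hl0)
                (mul_le_mul_of_nonneg_left h1 (by linarith))
          _ = B := by ring
  -- unrolling
  have key : ∀ j t, ∃ P : ℝ, 0 ≤ P ∧ P ≤ 1 ∧
      ∀ i, |y (t+j) i - P * (W ^ j).mulVec (y t) i|
        ≤ B * ∑ s ∈ Finset.range j, lam (t+s) := by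
    intro j
    induction j with
    | zero =>
        intro t
        exact ⟨1, zero_le_one, le_refl 1, fun i => by
          simp [pow_zero, Matrix.one_mulVec]⟩
    | succ j ih =>
        intro t
        obtain ⟨P, hP0, hP1, hPb⟩ := ih t
        obtain ⟨hl0, hl1⟩ := hlam (t+j)
        refine ⟨(1 - lam (t+j)) * P, mul_nonneg (by linarith) hP0,
          by nlinarith, ?_⟩
        intro i
        have hS0 : 0 ≤ B * ∑ s ∈ Finset.range j, lam (t+s) :=
          mul_nonneg hB0 (Finset.sum_nonneg fun s _ => (hlam _).1)
        have hWd : |W.mulVec (fun k => y (t+j) k - P * (W ^ j).mulVec (y t) k) i|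
            ≤ B * ∑ s ∈ Finset.range j, lam (t+s) :=
          aux_stoch_bound W hW0 hWrow _ _ hPb i
        have hpw : (W ^ (j+1)).mulVec (y t) i = W.mulVec ((W ^ j).mulVec (y t)) i := by
          rw [pow_succ', ← Matrix.mulVec_mulVec]
        have hlin : W.mulVec (fun k => y (t+j) k - P * (W ^ j).mulVec (y t) k) i
            = W.mulVec (y (t+j)) i - P * W.mulVec ((W ^ j).mulVec (y t)) i := by
          simp only [Matrix.mulVec, dotProduct]
          rw [Finset.mul_sum, ← Finset.sum_sub_distrib]
          exact Finset.sum_congr rfl fun k _ => by ring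
        have heq : y (t+(j+1)) i - (1 - lam (t+j)) * P * (W ^ (j+1)).mulVec (y t) i
            = lam (t+j) * y 0 i + (1 - lam (t+j)) *
              (W.mulVec (fun k => y (t+j) k - P * (W ^ j).mulVec (y t) k) i) := by
          have ht : t + (j+1) = (t+j) + 1 := rfl
          rw [ht, hyrec (t+j) i, hlin, hpw]
          ring
        rw [heq]
        calc |lam (t+j) * y 0 i + (1 - lam (t+j)) *
              (W.mulVec (fun k => y (t+j) k - P * (W ^ j).mulVec (y t) k) i)|
            ≤ |lam (t+j) * y 0 i| + |(1 - lam (t+j)) *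
              (W.mulVec (fun k => y (t+j) k - P * (W ^ j).mulVec (y t) k) i)| := abs_add_le _ _
          _ = lam (t+j) * |y 0 i| + (1 - lam (t+j)) *
              |W.mulVec (fun k => y (t+j) k - P * (W ^ j).mulVec (y t) k) i| := by
              rw [abs_mul, abs_mul, abs_of_nonneg hl0,
                abs_of_nonneg (show (0:ℝ) ≤ 1 - lam (t+j) from by linarith)]
          _ ≤ lam (t+j) * B + 1 * (B * ∑ s ∈ Finset.range j, lam (t+s)) := by
              refine add_le_add (mul_le_mul_of_nonneg_left (hy0B i) hl0) ?_
              refine mul_le_mul (by linarith) hWd (abs_nonneg _) zero_le_one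
          _ = B * ∑ s ∈ Finset.range (j+1), lam (t+s) := by
              rw [Finset.sum_range_succ]; ring
  -- pick T such that W^T is entrywise close to 𝟙vᵀ
  have hεall : ∀ᶠ t : ℕ in atTop, ∀ i j, |(W ^ t) i j - v j| ≤ (1 : ℝ) / (2 * L + 2) := by
    rw [eventually_all]
    intro i
    rw [eventually_all]
    intro j
    have hεpos : (0:ℝ) < 1 / (2*L+2) := by positivity
    have := (hent i j).eventually (Metric.ball_mem_nhds (v j) hεpos)
    filter_upwards [this] with t ht
    rw [Real.dist_eq] at ht
    exact le_of_lt ht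
  obtain ⟨T, hTε⟩ := hεall.exists
  -- contraction estimate
  have hcontr : ∀ t, ‖y (t+T)‖ ≤ ‖y t‖ / 2 + B * ∑ s ∈ Finset.range T, lam (t+s) := by
    intro t
    have hS0 : 0 ≤ B * ∑ s ∈ Finset.range T, lam (t+s) :=
      mul_nonneg hB0 (Finset.sum_nonneg fun s _ => (hlam _).1)
    have hn0 : 0 ≤ ‖y t‖ / 2 := by positivity
    refine (pi_norm_le_iff_of_nonneg (by linarith)).mpr fun i => ?_
    rw [Real.norm_eq_abs]
    obtain ⟨P, hP0, hP1, hPb⟩ := key T t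
    have h1 := hPb i
    have h2 : |(W ^ T).mulVec (y t) i| ≤ ‖y t‖ / 2 := by
      have he : (W ^ T).mulVec (y t) i = ∑ j, ((W ^ T) i j - v j) * y t j := by
        simp only [Matrix.mulVec, dotProduct]
        simp_rw [sub_mul]
        rw [Finset.sum_sub_distrib, hvy t, sub_zero]
      rw [he]
      have hyn : ∀ j, |y t j| ≤ ‖y t‖ := fun j => by
        simpa [Real.norm_eq_abs] using norm_le_pi_norm (y t) j
      calc |∑ j, ((W ^ T) i j - v j) * y t j|
          ≤ ∑ j, |((W ^ T) i j - v j) * y t j| := Finset.abs_sum_le_sum_abs _ _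
        _ ≤ ∑ _j : Fin L, (1/(2*(L:ℝ)+2)) * ‖y t‖ := by
            refine Finset.sum_le_sum fun j _ => ?_
            rw [abs_mul]
            exact mul_le_mul (hTε i j) (hyn j) (abs_nonneg _) (by positivity)
        _ = (L : ℝ) * ((1/(2*(L:ℝ)+2)) * ‖y t‖) := by
            rw [Finset.sum_const, Finset.card_univ, Fintype.card_fin, nsmul_eq_mul]
        _ ≤ ‖y t‖ / 2 := by
            have hLc : (L:ℝ) * (1/(2*(L:ℝ)+2)) ≤ 1/2 := by
              rw [mul_one_div, div_le_div_iff₀ (by positivity) two_pos]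
              linarith
            have := mul_le_mul_of_nonneg_right hLc (norm_nonneg (y t))
            calc (L : ℝ) * ((1/(2*(L:ℝ)+2)) * ‖y t‖)
                = ((L:ℝ) * (1/(2*(L:ℝ)+2))) * ‖y t‖ := by ring
              _ ≤ (1/2) * ‖y t‖ := this
              _ = ‖y t‖ / 2 := by ring
    have h3 : |P * (W ^ T).mulVec (y t) i| ≤ ‖y t‖ / 2 := by
      rw [abs_mul, abs_of_nonneg hP0]
      calc P * |(W ^ T).mulVec (y t) i| ≤ 1 * (‖y t‖ / 2) :=
          mul_le_mul hP1 h2 (abs_nonneg _) zero_le_one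
        _ = ‖y t‖ / 2 := one_mul _
    calc |y (t+T) i|
        = |(y (t+T) i - P * (W ^ T).mulVec (y t) i) + P * (W ^ T).mulVec (y t) i| := by
          ring_nf
      _ ≤ |y (t+T) i - P * (W ^ T).mulVec (y t) i| + |P * (W ^ T).mulVec (y t) i| :=
          abs_add_le _ _
      _ ≤ B * ∑ s ∈ Finset.range T, lam (t+s) + ‖y t‖ / 2 := add_le_add h1 h3
      _ = ‖y t‖ / 2 + B * ∑ s ∈ Finset.range T, lam (t+s) := by ring
  -- the error terms tend to zero
  have he0 : Tendsto (fun t => B * ∑ s ∈ Finset.range T, lam (t+s)) atTop (nhds 0) := by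
    have h1 : Tendsto (fun t => ∑ s ∈ Finset.range T, lam (t+s)) atTop (nhds 0) := by
      have := tendsto_finset_sum (Finset.range T) (fun s _ =>
        (hlam0.comp (tendsto_add_atTop_nat s) : Tendsto (fun t => lam (t+s)) atTop (nhds 0)))
      simpa using this
    have := h1.const_mul B
    simpa using this
  have hnorm : Tendsto (fun t => ‖y t‖) atTop (nhds 0) :=
    aux_contract _ B (fun t => norm_nonneg _)
      (fun t => (pi_norm_le_iff_of_nonneg hB0).mpr (fun i => by
        simpa [Real.norm_eq_abs] using hyB t i)) T _ he0 hcontr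
  have hy0 : Tendsto y atTop (nhds 0) := by
    rw [tendsto_zero_iff_norm_tendsto_zero]
    simpa using hnorm
  refine ⟨ξ, ?_⟩
  have hadd : Tendsto (fun t => y t + fun _ => ξ) atTop (nhds (0 + fun _ => ξ)) :=
    hy0.add tendsto_const_nhds
  rw [zero_add] at hadd
  have hxy : x = fun t => (y t + fun _ => ξ) := by
    funext t i
    simp [hy]
  rw [hxy]
  exact hadd
end

section
/- Let $c \in (0,1)$, $\gamma > 0$ and $\lambda_k = c e^{-\gamma k}$. Then the series $\sum_{k=0}^\infty \lambda_k \prod_{s=k+1}^\infty (1-\lambda_s)$ converges to a value in $(0,1]$, and each tail product satisfies $\prod_{s=k+1}^\infty (1-\lambda_s) < e^{z(\gamma; k+1)}$ where $z(\gamma; k) = -\frac{1}{\gamma} - \frac{\ln(1 - c e^{-\gamma(k+1)})}{\gamma} \cdot \frac{1 - c e^{-\gamma(k+1)}}{c e^{-\gamma(k+1)}}$. -/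
open Real

/-- The bound `z(γ; k)` on the logarithm of the tail products. -/
noncomputable def zBound (c γ : ℝ) (k : ℕ) : ℝ :=
  -1 / γ - Real.log (1 - c * Real.exp (-γ * (k + 1))) / γ
    * ((1 - c * Real.exp (-γ * (k + 1))) / (c * Real.exp (-γ * (k + 1))))

/-!
Write `P_k = ∏_{s ≥ k} (1 - λ_s)`. Then `λ_k P_{k+1} = P_{k+1} - P_k` and `P_k → 1`, so the
series telescopes to `1 - P_0 ∈ (0, 1]`.

For the bound, put `q = e^{-γ}` and `a = λ_{k+1}`. Expanding every `-log (1 - a q^s)` as a power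
series and summing over `s` first gives `-log P_{k+1} = ∑_n a^{n+1} / ((n+1)(1 - q^{n+1}))`.
Since `1 - q^{n+1} < γ (n+1)`, the `n`-th term exceeds `x^{n+1} / (γ (n+1)(n+2))` for every
`0 < x ≤ a`, and these terms sum to `s(x) / γ`, where `s(x) = ∑_{n ≥ 1} x^n / (n(n+1))` is the
paper's minorant of `Li₂`. Taking `x = λ_{k+2}` gives `z(γ; k+1)`; this discrete comparison
replaces the paper's integral comparison.
-/

open Filter Topology

noncomputable def tailProd (lam : ℕ → ℝ) (k : ℕ) : ℝ := ∏' s, (1 - lam (k + s))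

section TailProducts

variable {lam : ℕ → ℝ}

lemma summable_log_one_sub_of_summable (hsum : Summable lam) :
    Summable fun k => log (1 - lam k) := by
  simpa only [sub_eq_add_neg] using Real.summable_log_one_add_of_summable hsum.neg

variable (hlt : ∀ k, lam k < 1) (hsum : Summable lam)
include hlt hsum

lemma tailProd_eq_exp_tsum_log (k : ℕ) :
    tailProd lam k = exp (∑' s, log (1 - lam (k + s))) :=
  (Real.rexp_tsum_eq_tprod (fun s => sub_pos.2 (hlt (k + s)))
    ((summable_log_one_sub_of_summable hsum).comp_injective (add_right_injective k))).symm

lemma tailProd_pos (k : ℕ) : 0 < tailProd lam k := by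
  rw [tailProd_eq_exp_tsum_log hlt hsum]
  exact exp_pos _

lemma tailProd_eq_mul_tailProd_succ (k : ℕ) :
    tailProd lam k = (1 - lam k) * tailProd lam (k + 1) := by
  have hlog : Summable fun s => log (1 - lam (k + s)) :=
    (summable_log_one_sub_of_summable hsum).comp_injective (add_right_injective k)
  rw [tailProd_eq_exp_tsum_log hlt hsum, tailProd_eq_exp_tsum_log hlt hsum, hlog.tsum_eq_zero_add,
    exp_add, add_zero, exp_log (sub_pos.2 (hlt k))]
  simp only [add_assoc, add_comm 1]

lemma tendsto_tailProd_atTop : Tendsto (tailProd lam) atTop (𝓝 1) := by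
  have h := (tendsto_sum_nat_add fun s => log (1 - lam s)).rexp
  simp only [exp_zero] at h
  refine h.congr fun k => ?_
  simp only [tailProd_eq_exp_tsum_log hlt hsum, add_comm k]

lemma tailProd_le_one (hnonneg : ∀ k, 0 ≤ lam k) (k : ℕ) : tailProd lam k ≤ 1 := by
  rw [tailProd_eq_exp_tsum_log hlt hsum, exp_le_one_iff]
  exact tsum_nonpos fun s => log_nonpos (by linarith [hlt (k + s)]) (by linarith [hnonneg (k + s)])

lemma tailProd_lt_one (hnonneg : ∀ k, 0 ≤ lam k) {k : ℕ} (hk : 0 < lam k) :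
    tailProd lam k < 1 := by
  rw [tailProd_eq_mul_tailProd_succ hlt hsum k]
  nlinarith [mul_pos hk (tailProd_pos hlt hsum (k + 1)), tailProd_le_one hlt hsum hnonneg (k + 1)]

lemma hasSum_mul_tailProd_succ (hnonneg : ∀ k, 0 ≤ lam k) :
    HasSum (fun k => lam k * tailProd lam (k + 1)) (1 - tailProd lam 0) := by
  have htel : ∀ k, lam k * tailProd lam (k + 1) = tailProd lam (k + 1) - tailProd lam k := by
    intro k
    rw [tailProd_eq_mul_tailProd_succ hlt hsum k]
    ring
  rw [hasSum_iff_tendsto_nat_of_nonneg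
    (fun k => mul_nonneg (hnonneg k) (tailProd_pos hlt hsum _).le)]
  simp only [htel, Finset.sum_range_sub]
  exact (tendsto_tailProd_atTop hlt hsum).sub_const _

end TailProducts

noncomputable def dilogMinorant (x : ℝ) : ℝ := (x - x * log (1 - x) + log (1 - x)) / x

lemma hasSum_dilogMinorant {x : ℝ} (hx0 : x ≠ 0) (hx1 : |x| < 1) :
    HasSum (fun n : ℕ => x ^ (n + 1) / ((n + 1) * (n + 2))) (dilogMinorant x) := by
  have hlog := hasSum_pow_div_log_of_abs_lt_one hx1
  have hshift := ((hasSum_nat_add_iff' 1).2 hlog).div_const x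
  have hval : dilogMinorant x
      = -log (1 - x) - (-log (1 - x) - ∑ i ∈ Finset.range 1, x ^ (i + 1) / (i + 1)) / x := by
    simp only [dilogMinorant, Finset.sum_range_one]
    field_simp
    ring
  rw [hval]
  refine (hlog.sub hshift).congr_fun fun n => ?_
  push_cast
  field_simp
  ring

lemma hasSum_pow_mul_pow_div (a : ℝ) {q : ℝ} (hq0 : 0 ≤ q) (hq1 : q < 1) (n : ℕ) :
    HasSum (fun s : ℕ => (a * q ^ s) ^ (n + 1) / (n + 1))
      (a ^ (n + 1) / ((n + 1) * (1 - q ^ (n + 1)))) := by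
  have hqn : q ^ (n + 1) < 1 := pow_lt_one₀ hq0 hq1 n.succ_ne_zero
  rw [div_mul_eq_div_div, div_eq_mul_inv _ (1 - _)]
  refine ((hasSum_geometric_of_lt_one (by positivity) hqn).mul_left _).congr_fun fun s => ?_
  rw [mul_pow, ← pow_mul, ← pow_mul, mul_comm s]
  ring

lemma summable_pow_div_mul_one_sub_pow {a q : ℝ} (ha0 : 0 ≤ a) (ha1 : a < 1) (hq0 : 0 ≤ q)
    (hq1 : q < 1) : Summable fun n : ℕ => a ^ (n + 1) / ((n + 1) * (1 - q ^ (n + 1))) := by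
  refine Summable.of_nonneg_of_le (fun n => ?_) (fun n => ?_)
    (((summable_geometric_of_lt_one ha0 ha1).mul_left a).div_const (1 - q))
  · have := pow_lt_one₀ hq0 hq1 n.add_one_ne_zero
    exact div_nonneg (pow_nonneg ha0 _) (mul_nonneg (by positivity) (by linarith))
  · have hqn : q ^ (n + 1) ≤ q := pow_le_of_le_one hq0 hq1.le n.add_one_ne_zero
    rw [← pow_succ']
    gcongr
    nlinarith [mul_nonneg n.cast_nonneg (sub_nonneg.2 (hqn.trans hq1.le))]

lemma hasSum_neg_log_one_sub_mul_pow {a q : ℝ} (ha0 : 0 ≤ a) (ha1 : a < 1) (hq0 : 0 ≤ q)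
    (hq1 : q < 1) :
    HasSum (fun s : ℕ => -log (1 - a * q ^ s))
      (∑' n : ℕ, a ^ (n + 1) / ((n + 1) * (1 - q ^ (n + 1)))) := by
  let F : ℕ × ℕ → ℝ := fun p => (a * q ^ p.2) ^ (p.1 + 1) / (p.1 + 1)
  have hrow : ∀ n, HasSum (fun s => F (n, s)) _ := hasSum_pow_mul_pow_div a hq0 hq1
  have hF : Summable F := by
    rw [summable_prod_of_nonneg (fun p => by positivity)]
    exact ⟨fun n => (hrow n).summable, (summable_pow_div_mul_one_sub_pow ha0 ha1 hq0 hq1).congr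
      fun n => (hrow n).tsum_eq.symm⟩
  have hcol (s : ℕ) :
      HasSum (fun n : ℕ => (a * q ^ s) ^ (n + 1) / (n + 1)) (-log (1 - a * q ^ s)) := by
    refine hasSum_pow_div_log_of_abs_lt_one ?_
    rw [abs_of_nonneg (by positivity)]
    exact (mul_le_of_le_one_right ha0 (pow_le_one₀ hq0 hq1.le)).trans_lt ha1
  rw [(hF.hasSum.prod_fiberwise hrow).tsum_eq]
  exact ((Equiv.prodComm ℕ ℕ).hasSum_iff.2 hF.hasSum).prod_fiberwise hcol

lemma one_sub_exp_neg_lt {t : ℝ} (ht : t ≠ 0) : 1 - exp (-t) < t := by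
  linarith [add_one_lt_exp (neg_ne_zero.2 ht)]

lemma pow_div_mul_succ_succ_lt {γ x a : ℝ} (hγ : 0 < γ) (hx0 : 0 < x) (hxa : x ≤ a)
    (n : ℕ) :
    x ^ (n + 1) / ((n + 1) * (n + 2))
      < γ * (a ^ (n + 1) / ((n + 1) * (1 - exp (-γ) ^ (n + 1)))) := by
  have ha : 0 < a := hx0.trans_le hxa
  have hexp : 1 - exp (-γ) ^ (n + 1) < γ * (n + 1) := by
    rw [← exp_nat_mul, mul_neg, Nat.cast_add_one, mul_comm]
    exact one_sub_exp_neg_lt (by positivity)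
  have hpos : 0 < 1 - exp (-γ) ^ (n + 1) :=
    sub_pos.2 (pow_lt_one₀ (exp_pos _).le (exp_lt_one_iff.2 (by linarith)) n.add_one_ne_zero)
  calc x ^ (n + 1) / ((n + 1) * (n + 2)) ≤ a ^ (n + 1) / ((n + 1) * (n + 1)) := by
        gcongr; linarith
    _ = γ * (a ^ (n + 1) / ((n + 1) * (γ * (n + 1)))) := by field_simp
    _ < γ * (a ^ (n + 1) / ((n + 1) * (1 - exp (-γ) ^ (n + 1)))) := by
        gcongr

lemma tsum_log_one_sub_mul_exp_pow_lt {γ x a : ℝ} (hγ : 0 < γ) (hx0 : 0 < x) (hxa : x ≤ a)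
    (ha1 : a < 1) :
    ∑' s : ℕ, log (1 - a * exp (-γ) ^ s) < -dilogMinorant x / γ := by
  have ha0 : 0 ≤ a := hx0.le.trans hxa
  have hq1 : exp (-γ) < 1 := exp_lt_one_iff.2 (neg_lt_zero.2 hγ)
  have hlog := (hasSum_neg_log_one_sub_mul_pow ha0 ha1 (exp_pos _).le hq1).neg
  simp only [neg_neg] at hlog
  have hseries := hasSum_dilogMinorant hx0.ne' (by rw [abs_of_pos hx0]; linarith)
  have hcompare := hasSum_lt (fun n => (pow_div_mul_succ_succ_lt hγ hx0 hxa n).le)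
    (pow_div_mul_succ_succ_lt hγ hx0 hxa 0) hseries
    ((summable_pow_div_mul_one_sub_pow ha0 ha1 (exp_pos _).le hq1).hasSum.mul_left γ)
  rw [hlog.tsum_eq, neg_div, neg_lt_neg_iff, div_lt_iff₀' hγ]
  exact hcompare

lemma zBound_eq_neg_dilogMinorant_div {c : ℝ} (hc : c ≠ 0) (γ : ℝ) (k : ℕ) :
    zBound c γ k = -dilogMinorant (c * exp (-γ * (k + 1))) / γ := by
  rw [zBound, dilogMinorant]
  field_simp [hc, (exp_pos _).ne']
  ring

/-- For `λ_k = c e^{-γ k}` with `c ∈ (0,1)`, `γ > 0`: the series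
`∑_{k=0}^∞ λ_k ∏_{s=k+1}^∞ (1-λ_s)` converges to a value in `(0,1]`, and each tail
product satisfies `∏_{s=k+1}^∞ (1-λ_s) < e^{z(γ; k+1)}`. -/
theorem tail_products_bound
    (c γ : ℝ) (hc : c ∈ Set.Ioo (0 : ℝ) 1) (hγ : 0 < γ)
    (lam : ℕ → ℝ) (hlam : ∀ k, lam k = c * Real.exp (-γ * k)) :
    (Summable (fun k : ℕ => lam k * ∏' s : ℕ, (1 - lam (k + 1 + s))) ∧
      0 < (∑' k : ℕ, lam k * ∏' s : ℕ, (1 - lam (k + 1 + s))) ∧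
      (∑' k : ℕ, lam k * ∏' s : ℕ, (1 - lam (k + 1 + s))) ≤ 1) ∧
    ∀ k : ℕ, (∏' s : ℕ, (1 - lam (k + 1 + s))) < Real.exp (zBound c γ (k + 1)) := by
  obtain ⟨hc0, hc1⟩ := hc
  have hq1 : exp (-γ) < 1 := exp_lt_one_iff.2 (neg_lt_zero.2 hγ)
  have hlam_pow (k : ℕ) : lam k = c * exp (-γ) ^ k := by
    rw [hlam, ← exp_nat_mul]
    ring_nf
  have hpos (k : ℕ) : 0 < lam k := by
    rw [hlam_pow]
    positivity
  have hanti : Antitone lam := fun i j hij => by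
    simp only [hlam_pow]
    exact mul_le_mul_of_nonneg_left (pow_le_pow_of_le_one (exp_pos _).le hq1.le hij) hc0.le
  have hlt (k : ℕ) : lam k < 1 := by
    refine (hanti k.zero_le).trans_lt ?_
    rwa [hlam_pow, pow_zero, mul_one]
  have hsum : Summable lam :=
    ((summable_geometric_of_lt_one (exp_pos _).le hq1).mul_left c).congr fun k => (hlam_pow k).symm
  have hS : HasSum (fun k => lam k * ∏' s : ℕ, (1 - lam (k + 1 + s))) (1 - tailProd lam 0) :=
    hasSum_mul_tailProd_succ hlt hsum fun k => (hpos k).le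
  refine ⟨⟨hS.summable, ?_, ?_⟩, fun k => ?_⟩
  · rw [hS.tsum_eq, sub_pos]
    exact tailProd_lt_one hlt hsum (fun k => (hpos k).le) (hpos 0)
  · rw [hS.tsum_eq, sub_le_self_iff]
    exact (tailProd_pos hlt hsum 0).le
  · have htail : ∑' s : ℕ, log (1 - lam (k + 1 + s))
        = ∑' s : ℕ, log (1 - lam (k + 1) * exp (-γ) ^ s) := by
      simp only [hlam_pow, pow_add, mul_assoc]
    have hx : c * exp (-γ * ((↑(k + 1) : ℝ) + 1)) = lam (k + 2) := by
      rw [hlam]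
      push_cast
      ring_nf
    change tailProd lam (k + 1) < _
    rw [tailProd_eq_exp_tsum_log hlt hsum, exp_lt_exp, htail,
      zBound_eq_neg_dilogMinorant_div hc0.ne', hx]
    exact tsum_log_one_sub_mul_exp_pow_lt hγ (hpos (k + 2)) (hanti (by omega)) (hlt (k + 1))
end
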